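/- arXiv:2212.13383 — 3 statements merged into one kernel-verified Lean document; each statement's English description precedes it below -/
import Mathlib

section
/- The DPRH function f is a genuine bivariate probability density: f(y₁,y₂) ≥ 0 for all (y₁,y₂) ∈ ℝ², and ∫_a^b ∫_a^b f(y₁,y₂) dy₂ dy₁ = 1; moreover the integral over the lower triangle equals ∫_a^b ∫_a^{y₁} θ₁ θ₂′ f₀(y₁) f₀(y₂) F₀(y₁)^{θ₁+θ₂−θ₂′−1} F₀(y₂)^{θ₂′−1} dy₂ dy₁ = θ₁/(θ₁+θ₂) and the integral over the upper triangle equals θ₂/(θ₁+θ₂). -/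
/-!
Both triangles are integrated in `y₂` first, and every integral is then an integral of
`f₀ · g(F₀)` whose antiderivative is `G(F₀)`, evaluated through the limits `F₀ → 0` at `a` and
`F₀ → 1` at `b`. On the lower triangle the inner integral is `θ₁ f₀(y₁) F₀(y₁)^(θ₁+θ₂-1)`, so the
mass is `θ₁ / (θ₁ + θ₂)`. On the upper triangle the inner integral is the tail
`∫ s in F₀(y₁)..1, s^(σ-1)` with `σ = θ₁ + θ₂ - θ₁'`, which is `-log F₀(y₁)` when `σ = 0`; in
both cases the outer integral `∫ t^(θ₁'-1) ∫ s in t..1, s^(σ-1)` equals `1 / (θ₁' (θ₁ + θ₂))`, so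
the mass is `θ₂ / (θ₁ + θ₂)`.
-/

open MeasureTheory Set

noncomputable def dprh (a b : ℝ) (F₀ f₀ : ℝ → ℝ) (θ₁ θ₂ θ₁' θ₂' : ℝ) (y₁ y₂ : ℝ) : ℝ :=
  if a < y₁ ∧ y₁ < y₂ ∧ y₂ < b then
    θ₁' * θ₂ * f₀ y₁ * f₀ y₂ * F₀ y₁ ^ (θ₁' - 1) * F₀ y₂ ^ (θ₁ + θ₂ - θ₁' - 1)
  else if a < y₂ ∧ y₂ < y₁ ∧ y₁ < b then
    θ₁ * θ₂' * f₀ y₁ * f₀ y₂ * F₀ y₁ ^ (θ₁ + θ₂ - θ₂' - 1) * F₀ y₂ ^ (θ₂' - 1)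
  else 0

open Filter Topology

structure HasIntervalIntegral (f : ℝ → ℝ) (u v I : ℝ) : Prop where
  intervalIntegrable : IntervalIntegrable f volume u v
  integral_eq : ∫ x in u..v, f x = I

namespace HasIntervalIntegral

variable {f g : ℝ → ℝ} {u v I J : ℝ}

theorem congr_Ioo (hf : HasIntervalIntegral f u v I) (huv : u ≤ v) (hfg : EqOn f g (Ioo u v)) :
    HasIntervalIntegral g u v I where
  intervalIntegrable := hf.intervalIntegrable.congr_uIoo (uIoo_of_le huv ▸ hfg)
  integral_eq := (intervalIntegral.integral_congr_Ioo_of_le huv hfg).symm.trans hf.integral_eq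

theorem const_mul (hf : HasIntervalIntegral f u v I) (c : ℝ) :
    HasIntervalIntegral (fun x => c * f x) u v (c * I) :=
  ⟨hf.intervalIntegrable.const_mul c, by rw [intervalIntegral.integral_const_mul, hf.integral_eq]⟩

theorem div_const (hf : HasIntervalIntegral f u v I) (c : ℝ) :
    HasIntervalIntegral (fun x => f x / c) u v (I / c) :=
  ⟨hf.intervalIntegrable.div_const c, by rw [intervalIntegral.integral_div, hf.integral_eq]⟩

theorem add (hf : HasIntervalIntegral f u v I) (hg : HasIntervalIntegral g u v J) :
    HasIntervalIntegral (fun x => f x + g x) u v (I + J) :=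
  ⟨hf.intervalIntegrable.add hg.intervalIntegrable, by
    rw [intervalIntegral.integral_add hf.intervalIntegrable hg.intervalIntegrable, hf.integral_eq, hg.integral_eq]⟩

theorem sub (hf : HasIntervalIntegral f u v I) (hg : HasIntervalIntegral g u v J) :
    HasIntervalIntegral (fun x => f x - g x) u v (I - J) :=
  ⟨hf.intervalIntegrable.sub hg.intervalIntegrable, by
    rw [intervalIntegral.integral_sub hf.intervalIntegrable hg.intervalIntegrable, hf.integral_eq, hg.integral_eq]⟩

end HasIntervalIntegral

theorem intervalIntegrable_deriv_of_nonneg_of_tendsto {f f' : ℝ → ℝ} {a b fa fb : ℝ}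
    (hab : a < b) (hderiv : ∀ x ∈ Ioo a b, HasDerivAt f (f' x) x)
    (hpos : ∀ x ∈ Ioo a b, 0 ≤ f' x) (ha : Tendsto f (𝓝[>] a) (𝓝 fa))
    (hb : Tendsto f (𝓝[<] b) (𝓝 fb)) : IntervalIntegrable f' volume a b := by
  set g := Function.update (Function.update f a fa) b fb
  have hgf : EqOn g f (Ioo a b) := fun x hx => by
    simp only [g, Function.update_of_ne hx.2.ne, Function.update_of_ne hx.1.ne']
  have hg' : ∀ x ∈ Ioo a b, HasDerivAt g (f' x) x := fun x hx =>
    (hderiv x hx).congr_of_eventuallyEq (eventually_of_mem (Ioo_mem_nhds hx.1 hx.2) hgf)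
  have hg : ContinuousOn g (Icc a b) := by
    rw [continuousOn_update_iff, continuousOn_update_iff, Icc_sdiff_right, Ico_sdiff_left]
    refine ⟨⟨fun z hz => (hderiv z hz).continuousAt.continuousWithinAt, ?_⟩, ?_⟩
    · exact fun _ => ha.mono_left (nhdsWithin_mono _ Ioo_subset_Ioi_self)
    · rintro -
      refine (hb.congr' ?_).mono_left (nhdsWithin_mono _ Ico_subset_Iio_self)
      filter_upwards [Ioo_mem_nhdsLT hab] with _ hz using (Function.update_of_ne hz.1.ne' _ _).symm
  exact (intervalIntegrable_iff_integrableOn_Ioc_of_le hab.le).2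
    (intervalIntegral.integrableOn_deriv_of_nonneg hg hg' hpos)

theorem hasIntervalIntegral_deriv_of_nonneg_of_tendsto {f f' : ℝ → ℝ} {a b fa fb : ℝ}
    (hab : a < b) (hderiv : ∀ x ∈ Ioo a b, HasDerivAt f (f' x) x)
    (hpos : ∀ x ∈ Ioo a b, 0 ≤ f' x) (ha : Tendsto f (𝓝[>] a) (𝓝 fa))
    (hb : Tendsto f (𝓝[<] b) (𝓝 fb)) : HasIntervalIntegral f' a b (fb - fa) :=
  have hint := intervalIntegrable_deriv_of_nonneg_of_tendsto hab hderiv hpos ha hb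
  ⟨hint, intervalIntegral.integral_eq_sub_of_hasDerivAt_of_tendsto hab hderiv hint ha hb⟩

section

variable {F f : ℝ → ℝ} {u v L M : ℝ}

theorem hasIntervalIntegral_mul_rpow_sub_one {θ : ℝ} (huv : u < v)
    (hd : ∀ y ∈ Ioo u v, HasDerivAt F (f y) y) (hf : ∀ y ∈ Ioo u v, 0 ≤ f y)
    (hF : ∀ y ∈ Ioo u v, 0 < F y) (hL : Tendsto F (𝓝[>] u) (𝓝 L))
    (hM : Tendsto F (𝓝[<] v) (𝓝 M)) (hθ : θ ≠ 0) (hLθ : L ≠ 0 ∨ 0 ≤ θ)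
    (hMθ : M ≠ 0 ∨ 0 ≤ θ) :
    HasIntervalIntegral (fun y => f y * F y ^ (θ - 1)) u v (M ^ θ / θ - L ^ θ / θ) := by
  have hcont : ∀ t, t ≠ 0 ∨ 0 ≤ θ → ContinuousAt (fun s : ℝ => s ^ θ / θ) t := fun t ht =>
    (Real.continuousAt_rpow_const t θ ht).div_const θ
  refine hasIntervalIntegral_deriv_of_nonneg_of_tendsto huv (f := fun y => F y ^ θ / θ)
    (fun y hy => ?_) (fun y hy => mul_nonneg (hf y hy) (Real.rpow_nonneg (hF y hy).le _))
    ((hcont L hLθ).tendsto.comp hL) ((hcont M hMθ).tendsto.comp hM)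
  refine (((hd y hy).rpow_const (p := θ) (Or.inl (hF y hy).ne')).div_const θ).congr_deriv ?_
  field_simp

theorem hasIntervalIntegral_div_self (huv : u < v)
    (hd : ∀ y ∈ Ioo u v, HasDerivAt F (f y) y) (hf : ∀ y ∈ Ioo u v, 0 ≤ f y)
    (hF : ∀ y ∈ Ioo u v, 0 < F y) (hL : Tendsto F (𝓝[>] u) (𝓝 L))
    (hM : Tendsto F (𝓝[<] v) (𝓝 M)) (hL₀ : L ≠ 0) (hM₀ : M ≠ 0) :
    HasIntervalIntegral (fun y => f y / F y) u v (Real.log M - Real.log L) :=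
  hasIntervalIntegral_deriv_of_nonneg_of_tendsto huv (fun y hy => (hd y hy).log (hF y hy).ne')
    (fun y hy => div_nonneg (hf y hy) (hF y hy).le)
    ((Real.continuousAt_log hL₀).tendsto.comp hL) ((Real.continuousAt_log hM₀).tendsto.comp hM)

end

structure IsBaselineCDF (a b : ℝ) (F₀ f₀ : ℝ → ℝ) : Prop where
  lt : a < b
  hasDerivAt : ∀ y ∈ Ioo a b, HasDerivAt F₀ (f₀ y) y
  deriv_nonneg : ∀ y ∈ Ioo a b, 0 ≤ f₀ y
  pos : ∀ y ∈ Ioo a b, 0 < F₀ y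
  le_one : ∀ y ∈ Ioo a b, F₀ y ≤ 1
  tendsto_left : Tendsto F₀ (𝓝[>] a) (𝓝 0)
  tendsto_right : Tendsto F₀ (𝓝[<] b) (𝓝 1)

/-- `powTail σ t = ∫ s in t..1, s ^ (σ - 1)` for `0 < t`. -/
noncomputable def powTail (σ t : ℝ) : ℝ :=
  if σ = 0 then -Real.log t else (1 - t ^ σ) / σ

namespace IsBaselineCDF

variable {a b : ℝ} {F₀ f₀ : ℝ → ℝ}

theorem hasIntervalIntegral_head (h : IsBaselineCDF a b F₀ f₀) {y θ : ℝ} (hy : y ∈ Ioo a b)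
    (hθ : 0 < θ) : HasIntervalIntegral (fun z => f₀ z * F₀ z ^ (θ - 1)) a y (F₀ y ^ θ / θ) := by
  have hsub : Ioo a y ⊆ Ioo a b := Ioo_subset_Ioo_right hy.2.le
  simpa [Real.zero_rpow hθ.ne'] using hasIntervalIntegral_mul_rpow_sub_one hy.1
    (fun z hz => h.hasDerivAt z (hsub hz)) (fun z hz => h.deriv_nonneg z (hsub hz))
    (fun z hz => h.pos z (hsub hz)) h.tendsto_left
    ((h.hasDerivAt y hy).continuousAt.tendsto.mono_left nhdsWithin_le_nhds) hθ.ne'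
    (Or.inr hθ.le) (Or.inr hθ.le)

theorem hasIntervalIntegral_tail (h : IsBaselineCDF a b F₀ f₀) {y : ℝ} (hy : y ∈ Ioo a b)
    (σ : ℝ) : HasIntervalIntegral (fun z => f₀ z * F₀ z ^ (σ - 1)) y b (powTail σ (F₀ y)) := by
  have hsub : Ioo y b ⊆ Ioo a b := Ioo_subset_Ioo_left hy.1.le
  have hd := fun z hz => h.hasDerivAt z (hsub hz)
  have hf := fun z hz => h.deriv_nonneg z (hsub hz)
  have hF := fun z hz => h.pos z (hsub hz)
  have hFy : Tendsto F₀ (𝓝[>] y) (𝓝 (F₀ y)) :=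
    (h.hasDerivAt y hy).continuousAt.tendsto.mono_left nhdsWithin_le_nhds
  rw [powTail]
  split_ifs with hσ
  · subst hσ
    convert (hasIntervalIntegral_div_self hy.2 hd hf hF hFy h.tendsto_right (h.pos y hy).ne'
      one_ne_zero).congr_Ioo hy.2.le fun z _ => ?_ using 1
    · simp
    · simp [Real.rpow_neg_one, div_eq_mul_inv]
  · simpa [sub_div] using hasIntervalIntegral_mul_rpow_sub_one hy.2 hd hf hF hFy h.tendsto_right
      hσ (Or.inl (h.pos y hy).ne') (Or.inl one_ne_zero)

theorem hasIntervalIntegral_rpow (h : IsBaselineCDF a b F₀ f₀) {θ : ℝ} (hθ : 0 < θ) :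
    HasIntervalIntegral (fun y => f₀ y * F₀ y ^ (θ - 1)) a b (1 / θ) := by
  simpa [Real.zero_rpow hθ.ne'] using hasIntervalIntegral_mul_rpow_sub_one h.lt h.hasDerivAt
    h.deriv_nonneg h.pos h.tendsto_left h.tendsto_right hθ.ne' (Or.inr hθ.le) (Or.inr hθ.le)

theorem hasIntervalIntegral_mul_neg_log (h : IsBaselineCDF a b F₀ f₀) {θ : ℝ} (hθ : 0 < θ) :
    HasIntervalIntegral (fun y => f₀ y * F₀ y ^ (θ - 1) * -Real.log (F₀ y)) a b (1 / θ ^ 2) := by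
  set G := fun y => F₀ y ^ θ / θ ^ 2 - Real.log (F₀ y) * F₀ y ^ θ / θ
  have hG : ∀ y ∈ Ioo a b, HasDerivAt G (f₀ y * F₀ y ^ (θ - 1) * -Real.log (F₀ y)) y := by
    intro y hy
    have hF := h.pos y hy
    have hpow := (h.hasDerivAt y hy).rpow_const (p := θ) (Or.inl hF.ne')
    refine ((hpow.div_const (θ ^ 2)).sub
      ((((h.hasDerivAt y hy).log hF.ne').mul hpow).div_const θ)).congr_deriv ?_
    rw [Real.rpow_sub_one hF.ne']
    field_simp
    ring
  have hnonneg : ∀ y ∈ Ioo a b, 0 ≤ f₀ y * F₀ y ^ (θ - 1) * -Real.log (F₀ y) := fun y hy =>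
    mul_nonneg (mul_nonneg (h.deriv_nonneg y hy) (Real.rpow_nonneg (h.pos y hy).le _))
      (neg_nonneg.2 (Real.log_nonpos (h.pos y hy).le (h.le_one y hy)))
  have hF₀ : Tendsto F₀ (𝓝[>] a) (𝓝[>] 0) :=
    tendsto_nhdsWithin_of_tendsto_nhds_of_eventually_within _ h.tendsto_left
      (eventually_of_mem (Ioo_mem_nhdsGT h.lt) h.pos)
  have hGa : Tendsto G (𝓝[>] a) (𝓝 0) := by
    have hpow := (Real.continuousAt_rpow_const 0 θ (Or.inr hθ.le)).tendsto.comp h.tendsto_left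
    simpa [Real.zero_rpow hθ.ne'] using
      (hpow.div_const (θ ^ 2)).sub (((tendsto_log_mul_rpow_nhdsGT_zero hθ).comp hF₀).div_const θ)
  have hGb : Tendsto G (𝓝[<] b) (𝓝 (1 / θ ^ 2)) := by
    have hpow := Real.continuousAt_rpow_const 1 θ (Or.inl one_ne_zero)
    rw [show 1 / θ ^ 2 = (1 : ℝ) ^ θ / θ ^ 2 - Real.log 1 * (1 : ℝ) ^ θ / θ by simp]
    exact ((hpow.div_const (θ ^ 2)).sub
      (((Real.continuousAt_log one_ne_zero).mul hpow).div_const θ)).tendsto.comp h.tendsto_right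
  simpa using hasIntervalIntegral_deriv_of_nonneg_of_tendsto h.lt hG hnonneg hGa hGb

theorem hasIntervalIntegral_mul_powTail (h : IsBaselineCDF a b F₀ f₀) {θ σ : ℝ} (hθ : 0 < θ)
    (hθσ : 0 < θ + σ) :
    HasIntervalIntegral (fun y => f₀ y * F₀ y ^ (θ - 1) * powTail σ (F₀ y)) a b
      (1 / (θ * (θ + σ))) := by
  by_cases hσ : σ = 0
  · subst hσ
    simpa [powTail, sq] using h.hasIntervalIntegral_mul_neg_log hθ
  · have := ((h.hasIntervalIntegral_rpow hθ).sub (h.hasIntervalIntegral_rpow hθσ)).div_const σ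
    convert this.congr_Ioo h.lt.le fun y hy => ?_ using 1
    · field_simp
      ring
    · simp only [powTail, if_neg hσ]
      rw [show θ + σ - 1 = θ - 1 + σ by ring, Real.rpow_add (h.pos y hy)]
      ring

end IsBaselineCDF

section DPRH

variable {a b : ℝ} {F₀ f₀ : ℝ → ℝ} {θ₁ θ₂ θ₁' θ₂' y₁ : ℝ}

theorem dprh_nonneg (h : IsBaselineCDF a b F₀ f₀) (hθ₁ : 0 ≤ θ₁) (hθ₂ : 0 ≤ θ₂)
    (hθ₁' : 0 ≤ θ₁') (hθ₂' : 0 ≤ θ₂') (y₁ y₂ : ℝ) :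
    0 ≤ dprh a b F₀ f₀ θ₁ θ₂ θ₁' θ₂' y₁ y₂ := by
  have hf := h.deriv_nonneg
  have hF := fun y hy => (h.pos y hy).le
  unfold dprh
  split_ifs with hup hlow
  · have hy₁ : y₁ ∈ Ioo a b := ⟨hup.1, hup.2.1.trans hup.2.2⟩
    have hy₂ : y₂ ∈ Ioo a b := ⟨hup.1.trans hup.2.1, hup.2.2⟩
    have := hf y₁ hy₁; have := hf y₂ hy₂; have := hF y₁ hy₁; have := hF y₂ hy₂
    positivity
  · have hy₁ : y₁ ∈ Ioo a b := ⟨hlow.1.trans hlow.2.1, hlow.2.2⟩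
    have hy₂ : y₂ ∈ Ioo a b := ⟨hlow.1, hlow.2.1.trans hlow.2.2⟩
    have := hf y₁ hy₁; have := hf y₂ hy₂; have := hF y₁ hy₁; have := hF y₂ hy₂
    positivity
  · exact le_rfl

theorem eqOn_dprh_lower (hy₁ : y₁ < b) :
    EqOn (dprh a b F₀ f₀ θ₁ θ₂ θ₁' θ₂' y₁) (fun y₂ =>
      θ₁ * θ₂' * f₀ y₁ * f₀ y₂ * F₀ y₁ ^ (θ₁ + θ₂ - θ₂' - 1) * F₀ y₂ ^ (θ₂' - 1)) (Ioo a y₁) :=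
  fun _ hy₂ => by
    rw [dprh, if_neg fun hup => hy₂.2.not_gt hup.2.1, if_pos ⟨hy₂.1, hy₂.2, hy₁⟩]

theorem eqOn_dprh_upper (hy₁ : a < y₁) :
    EqOn (dprh a b F₀ f₀ θ₁ θ₂ θ₁' θ₂' y₁) (fun y₂ =>
      θ₁' * θ₂ * f₀ y₁ * f₀ y₂ * F₀ y₁ ^ (θ₁' - 1) * F₀ y₂ ^ (θ₁ + θ₂ - θ₁' - 1)) (Ioo y₁ b) :=
  fun _ hy₂ => by rw [dprh, if_pos ⟨hy₁, hy₂.1, hy₂.2⟩]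

theorem hasIntervalIntegral_lower_inner (h : IsBaselineCDF a b F₀ f₀) (hy₁ : y₁ ∈ Ioo a b)
    (hθ₂' : 0 < θ₂') :
    HasIntervalIntegral (fun y₂ =>
      θ₁ * θ₂' * f₀ y₁ * f₀ y₂ * F₀ y₁ ^ (θ₁ + θ₂ - θ₂' - 1) * F₀ y₂ ^ (θ₂' - 1)) a y₁
      (θ₁ * (f₀ y₁ * F₀ y₁ ^ (θ₁ + θ₂ - 1))) := by
  convert (h.hasIntervalIntegral_head hy₁ hθ₂').const_mul
    (θ₁ * θ₂' * f₀ y₁ * F₀ y₁ ^ (θ₁ + θ₂ - θ₂' - 1)) using 1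
  · ext y₂
    ring
  · rw [show θ₁ + θ₂ - 1 = θ₁ + θ₂ - θ₂' - 1 + θ₂' by ring, Real.rpow_add (h.pos y₁ hy₁)]
    field_simp

theorem hasIntervalIntegral_dprh_lower_inner (h : IsBaselineCDF a b F₀ f₀)
    (hy₁ : y₁ ∈ Ioo a b) (hθ₂' : 0 < θ₂') :
    HasIntervalIntegral (dprh a b F₀ f₀ θ₁ θ₂ θ₁' θ₂' y₁) a y₁
      (θ₁ * (f₀ y₁ * F₀ y₁ ^ (θ₁ + θ₂ - 1))) :=
  (hasIntervalIntegral_lower_inner h hy₁ hθ₂').congr_Ioo hy₁.1.le (eqOn_dprh_lower hy₁.2).symm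

theorem hasIntervalIntegral_dprh_upper_inner (h : IsBaselineCDF a b F₀ f₀)
    (hy₁ : y₁ ∈ Ioo a b) :
    HasIntervalIntegral (dprh a b F₀ f₀ θ₁ θ₂ θ₁' θ₂' y₁) y₁ b
      (θ₁' * θ₂ * (f₀ y₁ * F₀ y₁ ^ (θ₁' - 1) * powTail (θ₁ + θ₂ - θ₁') (F₀ y₁))) := by
  convert ((h.hasIntervalIntegral_tail hy₁ (θ₁ + θ₂ - θ₁')).const_mul
    (θ₁' * θ₂ * f₀ y₁ * F₀ y₁ ^ (θ₁' - 1))).congr_Ioo hy₁.2.le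
    (fun y₂ hy₂ => ?_) using 1
  · ring
  · rw [eqOn_dprh_upper hy₁.1 hy₂]
    ring

theorem hasIntervalIntegral_lower (h : IsBaselineCDF a b F₀ f₀) (hθ : 0 < θ₁ + θ₂)
    (hθ₂' : 0 < θ₂') :
    HasIntervalIntegral (fun y₁ => ∫ y₂ in a..y₁,
      θ₁ * θ₂' * f₀ y₁ * f₀ y₂ * F₀ y₁ ^ (θ₁ + θ₂ - θ₂' - 1) * F₀ y₂ ^ (θ₂' - 1)) a b
      (θ₁ / (θ₁ + θ₂)) := by
  rw [← mul_one_div]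
  exact ((h.hasIntervalIntegral_rpow hθ).const_mul θ₁).congr_Ioo h.lt.le fun y₁ hy₁ =>
    ((hasIntervalIntegral_lower_inner h hy₁ hθ₂').integral_eq).symm

theorem hasIntervalIntegral_dprh_lower (h : IsBaselineCDF a b F₀ f₀) (hθ : 0 < θ₁ + θ₂)
    (hθ₂' : 0 < θ₂') :
    HasIntervalIntegral (fun y₁ => ∫ y₂ in a..y₁, dprh a b F₀ f₀ θ₁ θ₂ θ₁' θ₂' y₁ y₂) a b
      (θ₁ / (θ₁ + θ₂)) :=
  (hasIntervalIntegral_lower h hθ hθ₂').congr_Ioo h.lt.le fun _ hy₁ =>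
    (intervalIntegral.integral_congr_Ioo_of_le hy₁.1.le (eqOn_dprh_lower hy₁.2)).symm

theorem hasIntervalIntegral_dprh_upper (h : IsBaselineCDF a b F₀ f₀) (hθ : 0 < θ₁ + θ₂)
    (hθ₁' : 0 < θ₁') :
    HasIntervalIntegral (fun y₁ => ∫ y₂ in y₁..b, dprh a b F₀ f₀ θ₁ θ₂ θ₁' θ₂' y₁ y₂) a b
      (θ₂ / (θ₁ + θ₂)) := by
  have hθσ : 0 < θ₁' + (θ₁ + θ₂ - θ₁') := by linarith
  convert ((h.hasIntervalIntegral_mul_powTail hθ₁' hθσ).const_mul (θ₁' * θ₂)).congr_Ioo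
    h.lt.le fun y₁ hy₁ => (hasIntervalIntegral_dprh_upper_inner h hy₁).integral_eq.symm using 1
  rw [add_sub_cancel]
  field_simp

theorem hasIntervalIntegral_dprh (h : IsBaselineCDF a b F₀ f₀) (hθ : 0 < θ₁ + θ₂)
    (hθ₁' : 0 < θ₁') (hθ₂' : 0 < θ₂') :
    HasIntervalIntegral (fun y₁ => ∫ y₂ in a..b, dprh a b F₀ f₀ θ₁ θ₂ θ₁' θ₂' y₁ y₂) a b 1 := by
  rw [← div_self hθ.ne', add_div]
  refine ((hasIntervalIntegral_dprh_lower (θ₁' := θ₁') h hθ hθ₂').add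
    (hasIntervalIntegral_dprh_upper (θ₂' := θ₂') h hθ hθ₁')).congr_Ioo h.lt.le fun y₁ hy₁ => ?_
  exact intervalIntegral.integral_add_adjacent_intervals
    (hasIntervalIntegral_dprh_lower_inner h hy₁ hθ₂').intervalIntegrable
    (hasIntervalIntegral_dprh_upper_inner h hy₁).intervalIntegrable

end DPRH

theorem dprh_is_density_general
    (a b : ℝ) (hab : a < b) (F₀ f₀ : ℝ → ℝ)
    (hderiv : ∀ y ∈ Ioo a b, HasDerivAt F₀ (f₀ y) y)
    (hf₀pos : ∀ y ∈ Ioo a b, 0 < f₀ y)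
    (hF₀pos : ∀ y ∈ Ioo a b, 0 < F₀ y)
    (hF₀lt1 : ∀ y ∈ Ioo a b, F₀ y < 1)
    (hFa : Filter.Tendsto F₀ (nhdsWithin a (Ioi a)) (nhds 0))
    (hFb : Filter.Tendsto F₀ (nhdsWithin b (Iio b)) (nhds 1))
    (θ₁ θ₂ θ₁' θ₂' : ℝ) (hθ₁ : 0 < θ₁) (hθ₂ : 0 < θ₂) (hθ₁' : 0 < θ₁') (hθ₂' : 0 < θ₂')
    :
    (∀ y₁ y₂ : ℝ, 0 ≤ dprh a b F₀ f₀ θ₁ θ₂ θ₁' θ₂' y₁ y₂) ∧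
    (∫ y₁ in a..b, ∫ y₂ in a..y₁, dprh a b F₀ f₀ θ₁ θ₂ θ₁' θ₂' y₁ y₂) =
      (∫ y₁ in a..b, ∫ y₂ in a..y₁,
        θ₁ * θ₂' * f₀ y₁ * f₀ y₂ * F₀ y₁ ^ (θ₁ + θ₂ - θ₂' - 1) * F₀ y₂ ^ (θ₂' - 1)) ∧
    (∫ y₁ in a..b, ∫ y₂ in a..y₁,
        θ₁ * θ₂' * f₀ y₁ * f₀ y₂ * F₀ y₁ ^ (θ₁ + θ₂ - θ₂' - 1) * F₀ y₂ ^ (θ₂' - 1)) = θ₁ / (θ₁ + θ₂) ∧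
    (∫ y₁ in a..b, ∫ y₂ in y₁..b, dprh a b F₀ f₀ θ₁ θ₂ θ₁' θ₂' y₁ y₂) = θ₂ / (θ₁ + θ₂) ∧
    (∫ y₁ in a..b, ∫ y₂ in a..b, dprh a b F₀ f₀ θ₁ θ₂ θ₁' θ₂' y₁ y₂) = 1 := by
  have h : IsBaselineCDF a b F₀ f₀ := ⟨hab, hderiv, fun y hy => (hf₀pos y hy).le, hF₀pos,
    fun y hy => (hF₀lt1 y hy).le, hFa, hFb⟩
  have hθ : 0 < θ₁ + θ₂ := add_pos hθ₁ hθ₂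
  have hlower := (hasIntervalIntegral_lower h hθ hθ₂').integral_eq
  exact ⟨dprh_nonneg h hθ₁.le hθ₂.le hθ₁'.le hθ₂'.le,
    (hasIntervalIntegral_dprh_lower h hθ hθ₂').integral_eq.trans hlower.symm, hlower,
    (hasIntervalIntegral_dprh_upper h hθ hθ₁').integral_eq,
    (hasIntervalIntegral_dprh h hθ hθ₁' hθ₂').integral_eq⟩

theorem dprh_is_density
    (a b : ℝ) (hab : a < b) (F₀ f₀ : ℝ → ℝ)
    (hderiv : ∀ y ∈ Ioo a b, HasDerivAt F₀ (f₀ y) y)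
    (hf₀cont : ContinuousOn f₀ (Ioo a b))
    (hmono : StrictMonoOn F₀ (Ioo a b))
    (hf₀pos : ∀ y ∈ Ioo a b, 0 < f₀ y)
    (hF₀pos : ∀ y ∈ Ioo a b, 0 < F₀ y)
    (hF₀lt1 : ∀ y ∈ Ioo a b, F₀ y < 1)
    (hFa : Filter.Tendsto F₀ (nhdsWithin a (Ioi a)) (nhds 0))
    (hFb : Filter.Tendsto F₀ (nhdsWithin b (Iio b)) (nhds 1))
    (θ₁ θ₂ θ₁' θ₂' : ℝ) (hθ₁ : 0 < θ₁) (hθ₂ : 0 < θ₂) (hθ₁' : 0 < θ₁') (hθ₂' : 0 < θ₂')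
    :
    (∀ y₁ y₂ : ℝ, 0 ≤ dprh a b F₀ f₀ θ₁ θ₂ θ₁' θ₂' y₁ y₂) ∧
    (∫ y₁ in a..b, ∫ y₂ in a..y₁, dprh a b F₀ f₀ θ₁ θ₂ θ₁' θ₂' y₁ y₂) =
      (∫ y₁ in a..b, ∫ y₂ in a..y₁,
        θ₁ * θ₂' * f₀ y₁ * f₀ y₂ * F₀ y₁ ^ (θ₁ + θ₂ - θ₂' - 1) * F₀ y₂ ^ (θ₂' - 1)) ∧
    (∫ y₁ in a..b, ∫ y₂ in a..y₁,
        θ₁ * θ₂' * f₀ y₁ * f₀ y₂ * F₀ y₁ ^ (θ₁ + θ₂ - θ₂' - 1) * F₀ y₂ ^ (θ₂' - 1)) = θ₁ / (θ₁ + θ₂) ∧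
    (∫ y₁ in a..b, ∫ y₂ in y₁..b, dprh a b F₀ f₀ θ₁ θ₂ θ₁' θ₂' y₁ y₂) = θ₂ / (θ₁ + θ₂) ∧
    (∫ y₁ in a..b, ∫ y₂ in a..b, dprh a b F₀ f₀ θ₁ θ₂ θ₁' θ₂' y₁ y₂) = 1 :=
  dprh_is_density_general a b hab F₀ f₀ hderiv hf₀pos hF₀pos hF₀lt1 hFa hFb θ₁ θ₂ θ₁' θ₂' hθ₁ hθ₂
    hθ₁' hθ₂'
end

section
/- (CDF, Case 3.) Suppose θ₁+θ₂ ≠ θ₁′ and θ₁+θ₂ = θ₂′. Then for the joint CDF F(y₁,y₂) = ∫_a^{y₁} ∫_a^{y₂} f(u,v) dv du of the DPRH model: if a < y₁ < y₂ < b then F(y₁,y₂) = F₀(y₁)^{θ₁+θ₂} + (θ₂ F₀(y₁)^{θ₁′}/(θ₁+θ₂−θ₁′))·[F₀(y₂)^{θ₁+θ₂−θ₁′} − F₀(y₁)^{θ₁+θ₂−θ₁′}], and if a < y₂ < y₁ < b then F(y₁,y₂) = F₀(y₂)^{θ₁+θ₂}·[1 + θ₁ ln(F₀(y₁)/F₀(y₂))].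 -/
open MeasureTheory Set

/-!
Both formulas come from iterated one-dimensional calculus. Off the diagonal the density factorises
as `(function of u) * f₀ v * F₀ v ^ (c - 1)`, and `f₀ * F₀ ^ (c - 1)` is the derivative of
`F₀ ^ c / c`; since `F₀ → 0` at `a`, the integrals starting at `a` converge for `c > 0`.
When `θ₁ + θ₂ = θ₂'` the density below the diagonal is `θ₁ θ₂' f₀ u f₀ v F₀ v ^ (θ₂' - 1) / F₀ u`,
so integrating `u` across `(y₂, y₁)` produces the logarithm.
-/

open Filter Topology

section Calculus

variable {F₀ f₀ : ℝ → ℝ} {a b c x y z : ℝ}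

theorem intervalIntegrable_deriv_of_nonneg_of_tendsto_s4 {G g : ℝ → ℝ} {L : ℝ} (haz : a < z)
    (hderiv : ∀ x ∈ Ioc a z, HasDerivAt G (g x) x) (hg : ∀ x ∈ Ioo a z, 0 ≤ g x)
    (ha : Tendsto G (𝓝[>] a) (𝓝 L)) :
    IntervalIntegrable g volume a z := by
  have hcont : ContinuousOn (Function.update G a L) (Icc a z) := by
    rw [continuousOn_update_iff, Icc_sdiff_left]
    exact ⟨fun x hx => (hderiv x hx).continuousAt.continuousWithinAt,
      fun _ => ha.mono_left (nhdsWithin_mono _ Ioc_subset_Ioi_self)⟩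
  have hderiv' : ∀ x ∈ Ioo a z, HasDerivAt (Function.update G a L) (g x) x := fun x hx =>
    (hderiv x (Ioo_subset_Ioc_self hx)).congr_of_eventuallyEq <| by
      filter_upwards [Ioi_mem_nhds hx.1] with y hy using Function.update_of_ne hy.ne' _ _
  exact (intervalIntegrable_iff_integrableOn_Ioc_of_le haz.le).2
    (intervalIntegral.integrableOn_deriv_of_nonneg hcont hderiv' hg)

theorem hasDerivAt_rpow_const_div (hF : HasDerivAt F₀ (f₀ x) x) (hx : F₀ x ≠ 0) (hc : c ≠ 0) :
    HasDerivAt (fun v => F₀ v ^ c / c) (f₀ x * F₀ x ^ (c - 1)) x := by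
  refine ((hF.rpow_const (p := c) (Or.inl hx)).div_const c).congr_deriv ?_
  field_simp

theorem continuousOn_mul_rpow (hderiv : ∀ y ∈ Ioo a b, HasDerivAt F₀ (f₀ y) y)
    (hf₀cont : ContinuousOn f₀ (Ioo a b)) (hF₀ : ∀ y ∈ Ioo a b, 0 < F₀ y) (c : ℝ) :
    ContinuousOn (fun v => f₀ v * F₀ v ^ c) (Ioo a b) :=
  hf₀cont.mul ((HasDerivAt.continuousOn hderiv).rpow_const fun y hy => Or.inl (hF₀ y hy).ne')

theorem integral_mul_rpow_sub_one (hderiv : ∀ y ∈ Ioo a b, HasDerivAt F₀ (f₀ y) y)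
    (hf₀cont : ContinuousOn f₀ (Ioo a b)) (hF₀ : ∀ y ∈ Ioo a b, 0 < F₀ y) (hc : c ≠ 0)
    (hx : x ∈ Ioo a b) (hy : y ∈ Ioo a b) :
    ∫ v in x..y, f₀ v * F₀ v ^ (c - 1) = (F₀ y ^ c - F₀ x ^ c) / c := by
  have hsub : uIcc x y ⊆ Ioo a b := ordConnected_Ioo.uIcc_subset hx hy
  rw [intervalIntegral.integral_eq_sub_of_hasDerivAt
    (fun v hv => hasDerivAt_rpow_const_div (hderiv v (hsub hv)) (hF₀ v (hsub hv)).ne' hc)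
    (((continuousOn_mul_rpow hderiv hf₀cont hF₀ _).mono hsub).intervalIntegrable)]
  ring

theorem integral_div_eq_log_sub_log (hderiv : ∀ y ∈ Ioo a b, HasDerivAt F₀ (f₀ y) y)
    (hf₀cont : ContinuousOn f₀ (Ioo a b)) (hF₀ : ∀ y ∈ Ioo a b, 0 < F₀ y)
    (hx : x ∈ Ioo a b) (hy : y ∈ Ioo a b) :
    ∫ v in x..y, f₀ v / F₀ v = Real.log (F₀ y) - Real.log (F₀ x) := by
  have hsub : uIcc x y ⊆ Ioo a b := ordConnected_Ioo.uIcc_subset hx hy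
  have hcont : ContinuousOn (fun v => f₀ v / F₀ v) (Ioo a b) :=
    hf₀cont.div (HasDerivAt.continuousOn hderiv) fun v hv => (hF₀ v hv).ne'
  exact intervalIntegral.integral_eq_sub_of_hasDerivAt
    (fun v hv => (hderiv v (hsub hv)).log (hF₀ v (hsub hv)).ne')
    ((hcont.mono hsub).intervalIntegrable)

theorem tendsto_rpow_const_div_zero (hFa : Tendsto F₀ (𝓝[>] a) (𝓝 0)) (hc : 0 < c) :
    Tendsto (fun v => F₀ v ^ c / c) (𝓝[>] a) (𝓝 0) := by
  simpa [Real.zero_rpow hc.ne'] using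
    ((Real.continuousAt_rpow_const 0 c (Or.inr hc.le)).tendsto.comp hFa).div_const c

theorem intervalIntegrable_mul_rpow_sub_one_of_tendsto_zero
    (hderiv : ∀ y ∈ Ioo a b, HasDerivAt F₀ (f₀ y) y) (hf₀ : ∀ y ∈ Ioo a b, 0 ≤ f₀ y)
    (hF₀ : ∀ y ∈ Ioo a b, 0 < F₀ y) (hFa : Tendsto F₀ (𝓝[>] a) (𝓝 0)) (hc : 0 < c)
    (hz : z ∈ Ioo a b) :
    IntervalIntegrable (fun v => f₀ v * F₀ v ^ (c - 1)) volume a z := by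
  have hsub : Ioc a z ⊆ Ioo a b := Ioc_subset_Ioo_right hz.2
  exact intervalIntegrable_deriv_of_nonneg_of_tendsto_s4 hz.1
    (fun v hv => hasDerivAt_rpow_const_div (hderiv v (hsub hv)) (hF₀ v (hsub hv)).ne' hc.ne')
    (fun v hv => mul_nonneg (hf₀ v (hsub (Ioo_subset_Ioc_self hv)))
      (Real.rpow_nonneg (hF₀ v (hsub (Ioo_subset_Ioc_self hv))).le _))
    (tendsto_rpow_const_div_zero hFa hc)

theorem integral_mul_rpow_sub_one_of_tendsto_zero
    (hderiv : ∀ y ∈ Ioo a b, HasDerivAt F₀ (f₀ y) y) (hf₀ : ∀ y ∈ Ioo a b, 0 ≤ f₀ y)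
    (hF₀ : ∀ y ∈ Ioo a b, 0 < F₀ y) (hFa : Tendsto F₀ (𝓝[>] a) (𝓝 0)) (hc : 0 < c)
    (hz : z ∈ Ioo a b) :
    ∫ v in a..z, f₀ v * F₀ v ^ (c - 1) = F₀ z ^ c / c := by
  have hsub : Ioo a z ⊆ Ioo a b := Ioo_subset_Ioo_right hz.2.le
  have hderiv' := hasDerivAt_rpow_const_div (hderiv z hz) (hF₀ z hz).ne' hc.ne'
  simpa using intervalIntegral.integral_eq_sub_of_hasDerivAt_of_tendsto hz.1
    (fun v hv => hasDerivAt_rpow_const_div (hderiv v (hsub hv)) (hF₀ v (hsub hv)).ne' hc.ne')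
    (intervalIntegrable_mul_rpow_sub_one_of_tendsto_zero hderiv hf₀ hF₀ hFa hc hz)
    (tendsto_rpow_const_div_zero hFa hc)
    (hderiv'.continuousAt.tendsto.mono_left nhdsWithin_le_nhds)

end Calculus

section Density

variable {a b : ℝ} {F₀ f₀ : ℝ → ℝ} {θ₁ θ₂ θ₁' θ₂' u w z : ℝ}

theorem dprh_eqOn_of_le (hzu : z ≤ u) (hub : u < b) :
    EqOn (dprh a b F₀ f₀ θ₁ θ₂ θ₁' θ₂' u)
      (fun v => θ₁ * θ₂' * f₀ u * F₀ u ^ (θ₁ + θ₂ - θ₂' - 1) * (f₀ v * F₀ v ^ (θ₂' - 1)))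
      (Ioo a z) := by
  rintro v ⟨hav, hvz⟩
  have hvu : v < u := hvz.trans_le hzu
  rw [dprh, if_neg fun h => lt_asymm hvu h.2.1, if_pos ⟨hav, hvu, hub⟩]
  ring

theorem dprh_eqOn_of_lt (hau : a < u) (hzb : z ≤ b) :
    EqOn (dprh a b F₀ f₀ θ₁ θ₂ θ₁' θ₂' u)
      (fun v => θ₁' * θ₂ * f₀ u * F₀ u ^ (θ₁' - 1) * (f₀ v * F₀ v ^ (θ₁ + θ₂ - θ₁' - 1)))
      (Ioo u z) := by
  rintro v ⟨huv, hvz⟩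
  rw [dprh, if_pos ⟨hau, huv, hvz.trans_le hzb⟩]
  ring

theorem intervalIntegrable_dprh_of_le (hderiv : ∀ y ∈ Ioo a b, HasDerivAt F₀ (f₀ y) y)
    (hf₀ : ∀ y ∈ Ioo a b, 0 ≤ f₀ y) (hF₀ : ∀ y ∈ Ioo a b, 0 < F₀ y)
    (hFa : Tendsto F₀ (𝓝[>] a) (𝓝 0)) (hθ₂' : 0 < θ₂') (hz : z ∈ Ioo a b) (hzu : z ≤ u)
    (hub : u < b) :
    IntervalIntegrable (dprh a b F₀ f₀ θ₁ θ₂ θ₁' θ₂' u) volume a z :=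
  ((intervalIntegrable_mul_rpow_sub_one_of_tendsto_zero hderiv hf₀ hF₀ hFa hθ₂' hz).const_mul
    _).congr_uIoo (by rw [uIoo_of_le hz.1.le]; exact (dprh_eqOn_of_le hzu hub).symm)

theorem integral_dprh_of_le (hderiv : ∀ y ∈ Ioo a b, HasDerivAt F₀ (f₀ y) y)
    (hf₀ : ∀ y ∈ Ioo a b, 0 ≤ f₀ y) (hF₀ : ∀ y ∈ Ioo a b, 0 < F₀ y)
    (hFa : Tendsto F₀ (𝓝[>] a) (𝓝 0)) (hθ₂' : 0 < θ₂') (hz : z ∈ Ioo a b) (hzu : z ≤ u)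
    (hub : u < b) :
    ∫ v in a..z, dprh a b F₀ f₀ θ₁ θ₂ θ₁' θ₂' u v =
      θ₁ * f₀ u * F₀ u ^ (θ₁ + θ₂ - θ₂' - 1) * F₀ z ^ θ₂' := by
  rw [intervalIntegral.integral_congr_Ioo_of_le hz.1.le (dprh_eqOn_of_le hzu hub),
    intervalIntegral.integral_const_mul,
    integral_mul_rpow_sub_one_of_tendsto_zero hderiv hf₀ hF₀ hFa hθ₂' hz]
  field_simp

/-- With `c = θ₁ + θ₂ - θ₁'`, this is `θ₁ f₀ u F₀ u ^ (θ₁ + θ₂ - 1) + θ₁' θ₂ f₀ u F₀ u ^ (θ₁' - 1) *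
(F₀ z ^ c - F₀ u ^ c) / c`, regrouped over the two integrands `f₀ F₀ ^ (· - 1)` of the outer
integral. -/
theorem integral_dprh_of_lt (hderiv : ∀ y ∈ Ioo a b, HasDerivAt F₀ (f₀ y) y)
    (hf₀cont : ContinuousOn f₀ (Ioo a b)) (hf₀ : ∀ y ∈ Ioo a b, 0 ≤ f₀ y)
    (hF₀ : ∀ y ∈ Ioo a b, 0 < F₀ y) (hFa : Tendsto F₀ (𝓝[>] a) (𝓝 0)) (hθ₂' : 0 < θ₂')
    (hne : θ₁ + θ₂ ≠ θ₁') (hu : u ∈ Ioo a b) (hz : z ∈ Ioo a b) (huz : u < z) :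
    ∫ v in a..z, dprh a b F₀ f₀ θ₁ θ₂ θ₁' θ₂' u v =
      (θ₁ - θ₁' * θ₂ / (θ₁ + θ₂ - θ₁')) * (f₀ u * F₀ u ^ (θ₁ + θ₂ - 1)) +
        θ₁' * θ₂ / (θ₁ + θ₂ - θ₁') * F₀ z ^ (θ₁ + θ₂ - θ₁') * (f₀ u * F₀ u ^ (θ₁' - 1)) := by
  have hsub : uIcc u z ⊆ Ioo a b := ordConnected_Ioo.uIcc_subset hu hz
  have hright : IntervalIntegrable (dprh a b F₀ f₀ θ₁ θ₂ θ₁' θ₂' u) volume u z :=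
    (((continuousOn_mul_rpow hderiv hf₀cont hF₀ _).mono hsub).intervalIntegrable.const_mul
      _).congr_uIoo (by rw [uIoo_of_le huz.le]; exact (dprh_eqOn_of_lt hu.1 hz.2.le).symm)
  rw [← intervalIntegral.integral_add_adjacent_intervals
      (intervalIntegrable_dprh_of_le hderiv hf₀ hF₀ hFa hθ₂' hu le_rfl hu.2) hright,
    integral_dprh_of_le hderiv hf₀ hF₀ hFa hθ₂' hu le_rfl hu.2,
    intervalIntegral.integral_congr_Ioo_of_le huz.le (dprh_eqOn_of_lt hu.1 hz.2.le),
    intervalIntegral.integral_const_mul,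
    integral_mul_rpow_sub_one hderiv hf₀cont hF₀ (sub_ne_zero.2 hne) hu hz]
  have hsplit (p q : ℝ) (hpq : p + q = θ₁ + θ₂ - 1) :
      F₀ u ^ p * F₀ u ^ q = F₀ u ^ (θ₁ + θ₂ - 1) := by
    rw [← Real.rpow_add (hF₀ u hu), hpq]
  linear_combination (θ₁ * f₀ u) * hsplit (θ₁ + θ₂ - θ₂' - 1) θ₂' (by ring) -
    (θ₁' * θ₂ * f₀ u / (θ₁ + θ₂ - θ₁')) * hsplit (θ₁' - 1) (θ₁ + θ₂ - θ₁') (by ring)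

theorem intervalIntegrable_integral_dprh (hderiv : ∀ y ∈ Ioo a b, HasDerivAt F₀ (f₀ y) y)
    (hf₀cont : ContinuousOn f₀ (Ioo a b)) (hf₀ : ∀ y ∈ Ioo a b, 0 ≤ f₀ y)
    (hF₀ : ∀ y ∈ Ioo a b, 0 < F₀ y) (hFa : Tendsto F₀ (𝓝[>] a) (𝓝 0)) (hs : 0 < θ₁ + θ₂)
    (hθ₁' : 0 < θ₁') (hθ₂' : 0 < θ₂') (hne : θ₁ + θ₂ ≠ θ₁') (haw : a < w) (hwz : w ≤ z)
    (hz : z ∈ Ioo a b) :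
    IntervalIntegrable (fun u => ∫ v in a..z, dprh a b F₀ f₀ θ₁ θ₂ θ₁' θ₂' u v) volume a w := by
  have hw : w ∈ Ioo a b := ⟨haw, hwz.trans_lt hz.2⟩
  have hinner := fun u (hu : u ∈ Ioo a w) => integral_dprh_of_lt hderiv hf₀cont hf₀ hF₀ hFa
    hθ₂' hne ⟨hu.1, hu.2.trans hw.2⟩ hz (hu.2.trans_le hwz)
  exact (((intervalIntegrable_mul_rpow_sub_one_of_tendsto_zero hderiv hf₀ hF₀ hFa hs
    hw).const_mul _).add ((intervalIntegrable_mul_rpow_sub_one_of_tendsto_zero hderiv hf₀ hF₀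
    hFa hθ₁' hw).const_mul _)).congr_uIoo
    (by rw [uIoo_of_le haw.le]; exact fun u hu => (hinner u hu).symm)

theorem integral_integral_dprh_of_le (hderiv : ∀ y ∈ Ioo a b, HasDerivAt F₀ (f₀ y) y)
    (hf₀cont : ContinuousOn f₀ (Ioo a b)) (hf₀ : ∀ y ∈ Ioo a b, 0 ≤ f₀ y)
    (hF₀ : ∀ y ∈ Ioo a b, 0 < F₀ y) (hFa : Tendsto F₀ (𝓝[>] a) (𝓝 0)) (hs : 0 < θ₁ + θ₂)
    (hθ₁' : 0 < θ₁') (hθ₂' : 0 < θ₂') (hne : θ₁ + θ₂ ≠ θ₁') (haw : a < w) (hwz : w ≤ z)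
    (hz : z ∈ Ioo a b) :
    ∫ u in a..w, ∫ v in a..z, dprh a b F₀ f₀ θ₁ θ₂ θ₁' θ₂' u v =
      F₀ w ^ (θ₁ + θ₂) + θ₂ * F₀ w ^ θ₁' / (θ₁ + θ₂ - θ₁') *
        (F₀ z ^ (θ₁ + θ₂ - θ₁') - F₀ w ^ (θ₁ + θ₂ - θ₁')) := by
  have hw : w ∈ Ioo a b := ⟨haw, hwz.trans_lt hz.2⟩
  rw [intervalIntegral.integral_congr_Ioo_of_le haw.le fun u hu => integral_dprh_of_lt hderiv
      hf₀cont hf₀ hF₀ hFa hθ₂' hne ⟨hu.1, hu.2.trans hw.2⟩ hz (hu.2.trans_le hwz),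
    intervalIntegral.integral_add
      ((intervalIntegrable_mul_rpow_sub_one_of_tendsto_zero hderiv hf₀ hF₀ hFa hs hw).const_mul _)
      ((intervalIntegrable_mul_rpow_sub_one_of_tendsto_zero hderiv hf₀ hF₀ hFa hθ₁'
        hw).const_mul _),
    intervalIntegral.integral_const_mul, intervalIntegral.integral_const_mul,
    integral_mul_rpow_sub_one_of_tendsto_zero hderiv hf₀ hF₀ hFa hs hw,
    integral_mul_rpow_sub_one_of_tendsto_zero hderiv hf₀ hF₀ hFa hθ₁' hw]
  have hsplit : F₀ w ^ θ₁' * F₀ w ^ (θ₁ + θ₂ - θ₁') = F₀ w ^ (θ₁ + θ₂) := by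
    rw [← Real.rpow_add (hF₀ w hw), add_sub_cancel]
  have hc : θ₁ + θ₂ - θ₁' ≠ 0 := sub_ne_zero.2 hne
  rw [← hsplit]
  field_simp
  ring

theorem integral_integral_dprh_of_gt (hderiv : ∀ y ∈ Ioo a b, HasDerivAt F₀ (f₀ y) y)
    (hf₀cont : ContinuousOn f₀ (Ioo a b)) (hf₀ : ∀ y ∈ Ioo a b, 0 ≤ f₀ y)
    (hF₀ : ∀ y ∈ Ioo a b, 0 < F₀ y) (hFa : Tendsto F₀ (𝓝[>] a) (𝓝 0)) (hθ₁' : 0 < θ₁')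
    (hθ₂' : 0 < θ₂') (hne : θ₁ + θ₂ ≠ θ₁') (heq : θ₁ + θ₂ = θ₂') (hz : z ∈ Ioo a b)
    (hw : w ∈ Ioo a b) (hzw : z < w) :
    ∫ u in a..w, ∫ v in a..z, dprh a b F₀ f₀ θ₁ θ₂ θ₁' θ₂' u v =
      F₀ z ^ (θ₁ + θ₂) * (1 + θ₁ * Real.log (F₀ w / F₀ z)) := by
  have hs : 0 < θ₁ + θ₂ := heq ▸ hθ₂'
  have hsub : uIcc z w ⊆ Ioo a b := ordConnected_Ioo.uIcc_subset hz hw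
  have hinner : EqOn (fun u => ∫ v in a..z, dprh a b F₀ f₀ θ₁ θ₂ θ₁' θ₂' u v)
      (fun u => θ₁ * F₀ z ^ θ₂' * (f₀ u / F₀ u)) (Ioo z w) := fun u hu => by
    have hu' : u ∈ Ioo a b := hsub (Ioo_subset_Icc_self.trans Icc_subset_uIcc hu)
    dsimp only
    rw [integral_dprh_of_le hderiv hf₀ hF₀ hFa hθ₂' hz hu.1.le hu'.2, heq, sub_self, zero_sub,
      Real.rpow_neg_one]
    field_simp
  have hright : IntervalIntegrable (fun u => ∫ v in a..z, dprh a b F₀ f₀ θ₁ θ₂ θ₁' θ₂' u v)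
      volume z w :=
    ((((hf₀cont.div (HasDerivAt.continuousOn hderiv) fun v hv => (hF₀ v hv).ne').mono
      hsub).intervalIntegrable).const_mul _).congr_uIoo
      (by rw [uIoo_of_le hzw.le]; exact hinner.symm)
  rw [← intervalIntegral.integral_add_adjacent_intervals (intervalIntegrable_integral_dprh hderiv
      hf₀cont hf₀ hF₀ hFa hs hθ₁' hθ₂' hne hz.1 le_rfl hz) hright,
    integral_integral_dprh_of_le hderiv hf₀cont hf₀ hF₀ hFa hs hθ₁' hθ₂' hne hz.1 le_rfl hz,
    intervalIntegral.integral_congr_Ioo_of_le hzw.le hinner, intervalIntegral.integral_const_mul,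
    integral_div_eq_log_sub_log hderiv hf₀cont hF₀ hz hw,
    Real.log_div (hF₀ w hw).ne' (hF₀ z hz).ne', ← heq]
  ring

end Density

theorem dprh_cdf_case3_general
    (a b : ℝ) (F₀ f₀ : ℝ → ℝ)
    (hderiv : ∀ y ∈ Ioo a b, HasDerivAt F₀ (f₀ y) y)
    (hf₀cont : ContinuousOn f₀ (Ioo a b))
    (hf₀pos : ∀ y ∈ Ioo a b, 0 < f₀ y)
    (hF₀pos : ∀ y ∈ Ioo a b, 0 < F₀ y)
    (hFa : Filter.Tendsto F₀ (nhdsWithin a (Ioi a)) (nhds 0))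
    (θ₁ θ₂ θ₁' θ₂' : ℝ) (hθ₁' : 0 < θ₁') (hθ₂' : 0 < θ₂')
    (hne₁ : θ₁ + θ₂ ≠ θ₁') (heq₂ : θ₁ + θ₂ = θ₂') (y₁ y₂ : ℝ)
    :
    (a < y₁ → y₁ < y₂ → y₂ < b →
      (∫ u in a..y₁, ∫ v in a..y₂, dprh a b F₀ f₀ θ₁ θ₂ θ₁' θ₂' u v) =
        F₀ y₁ ^ (θ₁ + θ₂) + θ₂ * F₀ y₁ ^ θ₁' / (θ₁ + θ₂ - θ₁') *
          (F₀ y₂ ^ (θ₁ + θ₂ - θ₁') - F₀ y₁ ^ (θ₁ + θ₂ - θ₁'))) ∧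
    (a < y₂ → y₂ < y₁ → y₁ < b →
      (∫ u in a..y₁, ∫ v in a..y₂, dprh a b F₀ f₀ θ₁ θ₂ θ₁' θ₂' u v) =
        F₀ y₂ ^ (θ₁ + θ₂) * (1 + θ₁ * Real.log (F₀ y₁ / F₀ y₂))) := by
  have hf₀ : ∀ y ∈ Ioo a b, 0 ≤ f₀ y := fun y hy => (hf₀pos y hy).le
  refine ⟨fun ha₁ h₁₂ h₂b => ?_, fun ha₂ h₂₁ h₁b => ?_⟩
  · exact integral_integral_dprh_of_le hderiv hf₀cont hf₀ hF₀pos hFa (heq₂ ▸ hθ₂') hθ₁' hθ₂'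
      hne₁ ha₁ h₁₂.le ⟨ha₁.trans h₁₂, h₂b⟩
  · exact integral_integral_dprh_of_gt hderiv hf₀cont hf₀ hF₀pos hFa hθ₁' hθ₂' hne₁ heq₂
      ⟨ha₂, h₂₁.trans h₁b⟩ ⟨ha₂.trans h₂₁, h₁b⟩ h₂₁

theorem dprh_cdf_case3
    (a b : ℝ) (hab : a < b) (F₀ f₀ : ℝ → ℝ)
    (hderiv : ∀ y ∈ Ioo a b, HasDerivAt F₀ (f₀ y) y)
    (hf₀cont : ContinuousOn f₀ (Ioo a b))
    (hmono : StrictMonoOn F₀ (Ioo a b))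
    (hf₀pos : ∀ y ∈ Ioo a b, 0 < f₀ y)
    (hF₀pos : ∀ y ∈ Ioo a b, 0 < F₀ y)
    (hF₀lt1 : ∀ y ∈ Ioo a b, F₀ y < 1)
    (hFa : Filter.Tendsto F₀ (nhdsWithin a (Ioi a)) (nhds 0))
    (hFb : Filter.Tendsto F₀ (nhdsWithin b (Iio b)) (nhds 1))
    (θ₁ θ₂ θ₁' θ₂' : ℝ) (hθ₁ : 0 < θ₁) (hθ₂ : 0 < θ₂) (hθ₁' : 0 < θ₁') (hθ₂' : 0 < θ₂')
    (hne₁ : θ₁ + θ₂ ≠ θ₁') (heq₂ : θ₁ + θ₂ = θ₂') (y₁ y₂ : ℝ)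
    :
    (a < y₁ → y₁ < y₂ → y₂ < b →
      (∫ u in a..y₁, ∫ v in a..y₂, dprh a b F₀ f₀ θ₁ θ₂ θ₁' θ₂' u v) =
        F₀ y₁ ^ (θ₁ + θ₂) + θ₂ * F₀ y₁ ^ θ₁' / (θ₁ + θ₂ - θ₁') *
          (F₀ y₂ ^ (θ₁ + θ₂ - θ₁') - F₀ y₁ ^ (θ₁ + θ₂ - θ₁'))) ∧
    (a < y₂ → y₂ < y₁ → y₁ < b →
      (∫ u in a..y₁, ∫ v in a..y₂, dprh a b F₀ f₀ θ₁ θ₂ θ₁' θ₂' u v) =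
        F₀ y₂ ^ (θ₁ + θ₂) * (1 + θ₁ * Real.log (F₀ y₁ / F₀ y₂))) :=
  dprh_cdf_case3_general a b F₀ f₀ hderiv hf₀cont hf₀pos hF₀pos hFa θ₁ θ₂ θ₁' θ₂' hθ₁' hθ₂' hne₁
    heq₂ y₁ y₂
end

section
/- (Marginals, Case 1.) Suppose θ₁+θ₂ ≠ θ₁′ and θ₁+θ₂ ≠ θ₂′. Then for every y₁ ∈ (a,b), the marginal CDF F_{Y₁}(y₁) = ∫_a^{y₁} ∫_a^b f(u,v) dv du equals (θ₂/(θ₁+θ₂−θ₁′))·F₀(y₁)^{θ₁′} + ((θ₁−θ₁′)/(θ₁+θ₂−θ₁′))·F₀(y₁)^{θ₁+θ₂}, and for every y₂ ∈ (a,b), the marginal CDF F_{Y₂}(y₂) = ∫_a^b ∫_a^{y₂} f(u,v) dv du equals (θ₁/(θ₁+θ₂−θ₂′))·F₀(y₂)^{θ₂′} + ((θ₂−θ₂′)/(θ₁+θ₂−θ₂′))·F₀(y₂)^{θ₁+θ₂}. -/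
open MeasureTheory Set



noncomputable def cF (a b : ℝ) (F₀ : ℝ → ℝ) : ℝ → ℝ :=
  fun x => if x ≤ a then 0 else if b ≤ x then 1 else F₀ x

lemma cF_eq_of_mem (a b : ℝ) (F₀ : ℝ → ℝ) {x : ℝ} (hx : x ∈ Ioo a b) :
    cF a b F₀ x = F₀ x := by
  simp [cF, not_le.2 hx.1, not_le.2 hx.2]

lemma cF_left (a b : ℝ) (F₀ : ℝ → ℝ) : cF a b F₀ a = 0 := by simp [cF]

lemma cF_right (a b : ℝ) (hab : a < b) (F₀ : ℝ → ℝ) : cF a b F₀ b = 1 := by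
  simp [cF, not_le.2 hab]

lemma cF_eventually_eq (a b : ℝ) (F₀ : ℝ → ℝ) {x : ℝ} (hx : x ∈ Ioo a b) :
    cF a b F₀ =ᶠ[nhds x] F₀ := by
  filter_upwards [Ioo_mem_nhds hx.1 hx.2] with y hy using cF_eq_of_mem a b F₀ hy

lemma cF_pos (a b : ℝ) (F₀ : ℝ → ℝ) (hF₀pos : ∀ y ∈ Ioo a b, 0 < F₀ y)
    {x : ℝ} (hx : a < x) : 0 < cF a b F₀ x := by
  unfold cF
  rw [if_neg (not_le.2 hx)]
  by_cases hb : b ≤ x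
  · rw [if_pos hb]; norm_num
  · rw [if_neg hb]; exact hF₀pos x ⟨hx, not_le.1 hb⟩

lemma cF_contOn (a b : ℝ) (hab : a < b) (F₀ f₀ : ℝ → ℝ)
    (hderiv : ∀ y ∈ Ioo a b, HasDerivAt F₀ (f₀ y) y)
    (hFa : Filter.Tendsto F₀ (nhdsWithin a (Ioi a)) (nhds 0))
    (hFb : Filter.Tendsto F₀ (nhdsWithin b (Iio b)) (nhds 1)) :
    ContinuousOn (cF a b F₀) (Icc a b) := by
  intro x hx
  rcases eq_or_lt_of_le hx.1 with rfl | hax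
  · -- x = a
    have h0 : cF a b F₀ a = 0 := cF_left a b F₀
    rw [ContinuousWithinAt, h0, ← Ioc_insert_left (le_of_lt hab), nhdsWithin_insert]
    refine Filter.Tendsto.sup ?_ ?_
    · rw [Filter.tendsto_pure_left]
      intro s hs; simpa [h0] using mem_of_mem_nhds hs
    · have h1 : Filter.Tendsto F₀ (nhdsWithin a (Ioc a b)) (nhds 0) :=
        hFa.mono_left (nhdsWithin_mono _ Ioc_subset_Ioi_self)
      refine h1.congr' ?_
      filter_upwards [nhdsWithin_le_nhds (Iio_mem_nhds hab), self_mem_nhdsWithin] with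
        y h1 h2
      exact (cF_eq_of_mem a b F₀ ⟨h2.1, h1⟩).symm
  rcases eq_or_lt_of_le hx.2 with rfl | hxb
  · -- x = b
    have h0 : cF a x F₀ x = 1 := cF_right a x hax F₀
    rw [ContinuousWithinAt, h0, ← Ico_insert_right (le_of_lt hax), nhdsWithin_insert]
    refine Filter.Tendsto.sup ?_ ?_
    · rw [Filter.tendsto_pure_left]
      intro s hs; simpa [h0] using mem_of_mem_nhds hs
    · have h1 : Filter.Tendsto F₀ (nhdsWithin x (Ico a x)) (nhds 1) :=
        hFb.mono_left (nhdsWithin_mono _ Ico_subset_Iio_self)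
      refine h1.congr' ?_
      filter_upwards [nhdsWithin_le_nhds (Ioi_mem_nhds hax), self_mem_nhdsWithin] with
        y h1 h2
      exact (cF_eq_of_mem a x F₀ ⟨h1, h2.2⟩).symm
  · have hc : ContinuousAt F₀ x := (hderiv x ⟨hax, hxb⟩).continuousAt
    exact (hc.congr (cF_eventually_eq a b F₀ ⟨hax, hxb⟩).symm).continuousWithinAt

lemma cFpow_hasDeriv (a b : ℝ) (F₀ f₀ : ℝ → ℝ)
    (hderiv : ∀ y ∈ Ioo a b, HasDerivAt F₀ (f₀ y) y)
    (hF₀pos : ∀ y ∈ Ioo a b, 0 < F₀ y)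
    (θ : ℝ) (hθ : θ ≠ 0) {x : ℝ} (hx : x ∈ Ioo a b) :
    HasDerivAt (fun y => cF a b F₀ y ^ θ / θ) (f₀ x * F₀ x ^ (θ - 1)) x := by
  have h2 : HasDerivAt (cF a b F₀) (f₀ x) x :=
    (hderiv x hx).congr_of_eventuallyEq (cF_eventually_eq a b F₀ hx)
  have h3 := (h2.rpow_const (p := θ)
    (Or.inl (by rw [cF_eq_of_mem a b F₀ hx]; exact (hF₀pos x hx).ne'))).div_const θ
  have h4 : f₀ x * θ * cF a b F₀ x ^ (θ - 1) / θ = f₀ x * F₀ x ^ (θ - 1) := by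
    rw [cF_eq_of_mem a b F₀ hx]; field_simp
  rw [h4] at h3
  exact h3

lemma master_int (a b : ℝ) (hab : a < b) (F₀ f₀ : ℝ → ℝ)
    (hderiv : ∀ y ∈ Ioo a b, HasDerivAt F₀ (f₀ y) y)
    (hf₀pos : ∀ y ∈ Ioo a b, 0 < f₀ y)
    (hF₀pos : ∀ y ∈ Ioo a b, 0 < F₀ y)
    (hFa : Filter.Tendsto F₀ (nhdsWithin a (Ioi a)) (nhds 0))
    (hFb : Filter.Tendsto F₀ (nhdsWithin b (Iio b)) (nhds 1))
    (θ : ℝ) {s t : ℝ} (hθ : 0 < θ ∨ (θ ≠ 0 ∧ a < s))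
    (has : a ≤ s) (hst : s ≤ t) (htb : t ≤ b) :
    IntegrableOn (fun v => f₀ v * F₀ v ^ (θ - 1)) (Ioc s t) := by
  have hθ0 : θ ≠ 0 := by rcases hθ with h | h; exacts [h.ne', h.1]
  have hsub : Ioo s t ⊆ Ioo a b := Ioo_subset_Ioo has htb
  have hcont : ContinuousOn (fun x => cF a b F₀ x ^ θ / θ) (Icc s t) := by
    refine ContinuousOn.div_const ?_ θ
    refine ContinuousOn.rpow_const
      ((cF_contOn a b hab F₀ f₀ hderiv hFa hFb).mono (Icc_subset_Icc has htb)) ?_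
    intro x hxm
    rcases hθ with h | h
    · exact Or.inr h.le
    · exact Or.inl (cF_pos a b F₀ hF₀pos (lt_of_lt_of_le h.2 hxm.1)).ne'
  refine intervalIntegral.integrableOn_deriv_of_nonneg hcont
    (fun x hx => cFpow_hasDeriv a b F₀ f₀ hderiv hF₀pos θ hθ0 (hsub hx)) ?_
  intro x hx
  exact mul_nonneg (hf₀pos x (hsub hx)).le (Real.rpow_pos_of_pos (hF₀pos x (hsub hx)) _).le

lemma master_val (a b : ℝ) (hab : a < b) (F₀ f₀ : ℝ → ℝ)
    (hderiv : ∀ y ∈ Ioo a b, HasDerivAt F₀ (f₀ y) y)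
    (hf₀pos : ∀ y ∈ Ioo a b, 0 < f₀ y)
    (hF₀pos : ∀ y ∈ Ioo a b, 0 < F₀ y)
    (hFa : Filter.Tendsto F₀ (nhdsWithin a (Ioi a)) (nhds 0))
    (hFb : Filter.Tendsto F₀ (nhdsWithin b (Iio b)) (nhds 1))
    (θ : ℝ) {s t : ℝ} (hθ : 0 < θ ∨ (θ ≠ 0 ∧ a < s))
    (has : a ≤ s) (hst : s ≤ t) (htb : t ≤ b) :
    ∫ v in s..t, f₀ v * F₀ v ^ (θ - 1)
      = cF a b F₀ t ^ θ / θ - cF a b F₀ s ^ θ / θ := by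
  have hθ0 : θ ≠ 0 := by rcases hθ with h | h; exacts [h.ne', h.1]
  have hsub : Ioo s t ⊆ Ioo a b := Ioo_subset_Ioo has htb
  have hcont : ContinuousOn (fun x => cF a b F₀ x ^ θ / θ) (Icc s t) := by
    refine ContinuousOn.div_const ?_ θ
    refine ContinuousOn.rpow_const
      ((cF_contOn a b hab F₀ f₀ hderiv hFa hFb).mono (Icc_subset_Icc has htb)) ?_
    intro x hxm
    rcases hθ with h | h
    · exact Or.inr h.le
    · exact Or.inl (cF_pos a b F₀ hF₀pos (lt_of_lt_of_le h.2 hxm.1)).ne'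
  exact intervalIntegral.integral_eq_sub_of_hasDeriv_right_of_le hst hcont
    (fun x hx =>
      (cFpow_hasDeriv a b F₀ f₀ hderiv hF₀pos θ hθ0 (hsub hx)).hasDerivWithinAt)
    ((intervalIntegrable_iff_integrableOn_Ioc_of_le hst).mpr
      (master_int a b hab F₀ f₀ hderiv hf₀pos hF₀pos hFa hFb θ hθ has hst htb))

theorem dprh_marginals_case1
    (a b : ℝ) (hab : a < b) (F₀ f₀ : ℝ → ℝ)
    (hderiv : ∀ y ∈ Ioo a b, HasDerivAt F₀ (f₀ y) y)
    (hf₀cont : ContinuousOn f₀ (Ioo a b))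
    (hmono : StrictMonoOn F₀ (Ioo a b))
    (hf₀pos : ∀ y ∈ Ioo a b, 0 < f₀ y)
    (hF₀pos : ∀ y ∈ Ioo a b, 0 < F₀ y)
    (hF₀lt1 : ∀ y ∈ Ioo a b, F₀ y < 1)
    (hFa : Filter.Tendsto F₀ (nhdsWithin a (Ioi a)) (nhds 0))
    (hFb : Filter.Tendsto F₀ (nhdsWithin b (Iio b)) (nhds 1))
    (θ₁ θ₂ θ₁' θ₂' : ℝ) (hθ₁ : 0 < θ₁) (hθ₂ : 0 < θ₂) (hθ₁' : 0 < θ₁') (hθ₂' : 0 < θ₂')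
    (hne₁ : θ₁ + θ₂ ≠ θ₁') (hne₂ : θ₁ + θ₂ ≠ θ₂')
    :
    (∀ y₁ ∈ Ioo a b,
      (∫ u in a..y₁, ∫ v in a..b, dprh a b F₀ f₀ θ₁ θ₂ θ₁' θ₂' u v) =
        θ₂ / (θ₁ + θ₂ - θ₁') * F₀ y₁ ^ θ₁' +
          (θ₁ - θ₁') / (θ₁ + θ₂ - θ₁') * F₀ y₁ ^ (θ₁ + θ₂)) ∧
    (∀ y₂ ∈ Ioo a b,
      (∫ u in a..b, ∫ v in a..y₂, dprh a b F₀ f₀ θ₁ θ₂ θ₁' θ₂' u v) =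
        θ₁ / (θ₁ + θ₂ - θ₂') * F₀ y₂ ^ θ₂' +
          (θ₂ - θ₂') / (θ₁ + θ₂ - θ₂') * F₀ y₂ ^ (θ₁ + θ₂)) := by
  -- abbreviations and generic facts
  have hθ12 : (0:ℝ) < θ₁ + θ₂ := by linarith
  have hθcne : θ₁ + θ₂ - θ₁' ≠ 0 := sub_ne_zero.mpr hne₁
  have hθdne : θ₁ + θ₂ - θ₂' ≠ 0 := sub_ne_zero.mpr hne₂
  have aene : ∀ c : ℝ, ∀ᵐ v : ℝ, v ≠ c := by
    intro c
    refine (MeasureTheory.ae_iff).2 ?_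
    simpa using measure_singleton c
  have hempty : ∀ {s t : ℝ}, s ≤ t → ∀ (f g : ℝ → ℝ),
      ∀ᵐ x : ℝ, x ∈ Ioc t s → f x = g x := by
    intro s t hst f g
    refine Filter.Eventually.of_forall fun x hx => ?_
    exact absurd (lt_of_lt_of_le hx.1 (hx.2.trans hst)) (lt_irrefl t)
  have valA : ∀ θ : ℝ, 0 < θ → ∀ t ∈ Ioo a b,
      (∫ v in a..t, f₀ v * F₀ v ^ (θ - 1)) = F₀ t ^ θ / θ := by
    intro θ hθ t ht
    rw [master_val a b hab F₀ f₀ hderiv hf₀pos hF₀pos hFa hFb θ (Or.inl hθ)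
        le_rfl ht.1.le ht.2.le, cF_left, cF_eq_of_mem a b F₀ ht,
      Real.zero_rpow hθ.ne', zero_div, sub_zero]
  have valB : ∀ θ : ℝ, θ ≠ 0 → ∀ s ∈ Ioo a b,
      (∫ v in s..b, f₀ v * F₀ v ^ (θ - 1)) = 1 / θ - F₀ s ^ θ / θ := by
    intro θ hθ s hs
    rw [master_val a b hab F₀ f₀ hderiv hf₀pos hF₀pos hFa hFb θ (Or.inr ⟨hθ, hs.1⟩)
        hs.1.le hs.2.le le_rfl, cF_right a b hab, cF_eq_of_mem a b F₀ hs,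
      Real.one_rpow, one_div]
  have valC : ∀ θ : ℝ, θ ≠ 0 → ∀ s t, s ∈ Ioo a b → t ∈ Ioo a b → s ≤ t →
      (∫ v in s..t, f₀ v * F₀ v ^ (θ - 1)) = F₀ t ^ θ / θ - F₀ s ^ θ / θ := by
    intro θ hθ s t hs ht hst
    rw [master_val a b hab F₀ f₀ hderiv hf₀pos hF₀pos hFa hFb θ (Or.inr ⟨hθ, hs.1⟩)
        hs.1.le hst ht.2.le, cF_eq_of_mem a b F₀ ht, cF_eq_of_mem a b F₀ hs]
  have intM : ∀ θ : ℝ, (0 < θ ∨ θ ≠ 0) → ∀ s t, a ≤ s → s ≤ t → t ≤ b →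
      (0 < θ ∨ a < s) →
      IntegrableOn (fun v => f₀ v * F₀ v ^ (θ - 1)) (Ioc s t) := by
    intro θ hθ s t h1 h2 h3 h4
    have hθ' : 0 < θ ∨ (θ ≠ 0 ∧ a < s) := by
      rcases h4 with h | h
      · exact Or.inl h
      · rcases hθ with h' | h'
        · exact Or.inl h'
        · exact Or.inr ⟨h', h⟩
    exact master_int a b hab F₀ f₀ hderiv hf₀pos hF₀pos hFa hFb θ hθ' h1 h2 h3
  constructor
  · -- first marginal
    intro y₁ hy₁
    have hInner : ∀ u ∈ Ioo a b,
        (∫ v in a..b, dprh a b F₀ f₀ θ₁ θ₂ θ₁' θ₂' u v)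
          = (θ₁ - θ₁' * θ₂ / (θ₁ + θ₂ - θ₁')) * (f₀ u * F₀ u ^ (θ₁ + θ₂ - 1))
            + (θ₁' * θ₂ / (θ₁ + θ₂ - θ₁')) * (f₀ u * F₀ u ^ (θ₁' - 1)) := by
      intro u hu
      have hP : (0:ℝ) < F₀ u := hF₀pos u hu
      -- left piece : a..u
      have h2eq : ∀ᵐ v : ℝ, v ∈ Ioc a u →
          (θ₁ * θ₂' * f₀ u * F₀ u ^ (θ₁ + θ₂ - θ₂' - 1)) * (f₀ v * F₀ v ^ (θ₂' - 1))
            = dprh a b F₀ f₀ θ₁ θ₂ θ₁' θ₂' u v := by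
        filter_upwards [aene u] with v hvne hv
        have hvu : v < u := lt_of_le_of_ne hv.2 hvne
        simp only [dprh]
        rw [if_neg (by rintro ⟨_, huv, _⟩; exact absurd huv (not_lt.2 hvu.le)),
          if_pos ⟨hv.1, hvu, hu.2⟩]
        ring
      have i2 : IntervalIntegrable (dprh a b F₀ f₀ θ₁ θ₂ θ₁' θ₂' u) volume a u := by
        rw [intervalIntegrable_iff_integrableOn_Ioc_of_le hu.1.le]
        exact ((intM θ₂' (Or.inl hθ₂') a u le_rfl hu.1.le hu.2.le
          (Or.inl hθ₂')).const_mul _).congr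
          ((ae_restrict_iff' measurableSet_Ioc).2 h2eq)
      have e1 : (∫ v in a..u, dprh a b F₀ f₀ θ₁ θ₂ θ₁' θ₂' u v)
          = θ₁ * (f₀ u * F₀ u ^ (θ₁ + θ₂ - 1)) := by
        rw [← intervalIntegral.integral_congr_ae' h2eq (hempty hu.1.le _ _),
          intervalIntegral.integral_const_mul, valA θ₂' hθ₂' u hu,
          show θ₁ + θ₂ - 1 = (θ₁ + θ₂ - θ₂' - 1) + θ₂' by ring, Real.rpow_add hP]
        field_simp
      -- right piece : u..b
      have h1eq : ∀ᵐ v : ℝ, v ∈ Ioc u b →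
          (θ₁' * θ₂ * f₀ u * F₀ u ^ (θ₁' - 1)) * (f₀ v * F₀ v ^ (θ₁ + θ₂ - θ₁' - 1))
            = dprh a b F₀ f₀ θ₁ θ₂ θ₁' θ₂' u v := by
        filter_upwards [aene b] with v hvne hv
        have hvb : v < b := lt_of_le_of_ne hv.2 hvne
        simp only [dprh]
        rw [if_pos ⟨hu.1, hv.1, hvb⟩]
        ring
      have i3 : IntervalIntegrable (dprh a b F₀ f₀ θ₁ θ₂ θ₁' θ₂' u) volume u b := by
        rw [intervalIntegrable_iff_integrableOn_Ioc_of_le hu.2.le]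
        exact ((intM (θ₁ + θ₂ - θ₁') (Or.inr hθcne) u b hu.1.le hu.2.le le_rfl
          (Or.inr hu.1)).const_mul _).congr
          ((ae_restrict_iff' measurableSet_Ioc).2 h1eq)
      have e2 : (∫ v in u..b, dprh a b F₀ f₀ θ₁ θ₂ θ₁' θ₂' u v)
          = (θ₁' * θ₂ / (θ₁ + θ₂ - θ₁')) * (f₀ u * F₀ u ^ (θ₁' - 1))
            - (θ₁' * θ₂ / (θ₁ + θ₂ - θ₁')) * (f₀ u * F₀ u ^ (θ₁ + θ₂ - 1)) := by
        rw [← intervalIntegral.integral_congr_ae' h1eq (hempty hu.2.le _ _),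
          intervalIntegral.integral_const_mul, valB (θ₁ + θ₂ - θ₁') hθcne u hu,
          show θ₁ + θ₂ - 1 = (θ₁' - 1) + (θ₁ + θ₂ - θ₁') by ring, Real.rpow_add hP]
        field_simp
      rw [← intervalIntegral.integral_add_adjacent_intervals i2 i3, e1, e2]
      ring
    have hmain : (∫ u in a..y₁, ∫ v in a..b, dprh a b F₀ f₀ θ₁ θ₂ θ₁' θ₂' u v)
        = ∫ u in a..y₁,
            ((θ₁ - θ₁' * θ₂ / (θ₁ + θ₂ - θ₁')) * (f₀ u * F₀ u ^ (θ₁ + θ₂ - 1))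
              + (θ₁' * θ₂ / (θ₁ + θ₂ - θ₁')) * (f₀ u * F₀ u ^ (θ₁' - 1))) := by
      refine intervalIntegral.integral_congr_ae'
        (Filter.Eventually.of_forall fun u hu =>
          hInner u ⟨hu.1, lt_of_le_of_lt hu.2 hy₁.2⟩) (hempty hy₁.1.le _ _)
    rw [hmain, intervalIntegral.integral_add
        (((intervalIntegrable_iff_integrableOn_Ioc_of_le hy₁.1.le).mpr
          (intM (θ₁ + θ₂) (Or.inl hθ12) a y₁ le_rfl hy₁.1.le hy₁.2.le
            (Or.inl hθ12))).const_mul _)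
        (((intervalIntegrable_iff_integrableOn_Ioc_of_le hy₁.1.le).mpr
          (intM θ₁' (Or.inl hθ₁') a y₁ le_rfl hy₁.1.le hy₁.2.le
            (Or.inl hθ₁'))).const_mul _),
      intervalIntegral.integral_const_mul, intervalIntegral.integral_const_mul,
      valA (θ₁ + θ₂) hθ12 y₁ hy₁, valA θ₁' hθ₁' y₁ hy₁]
    field_simp
    ring
  · -- second marginal
    intro y₂ hy₂
    have hQ : (0:ℝ) < F₀ y₂ := hF₀pos y₂ hy₂
    -- inner integral for u below y₂
    have hInner2a : ∀ u ∈ Ioo a y₂,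
        (∫ v in a..y₂, dprh a b F₀ f₀ θ₁ θ₂ θ₁' θ₂' u v)
          = (θ₁ - θ₁' * θ₂ / (θ₁ + θ₂ - θ₁')) * (f₀ u * F₀ u ^ (θ₁ + θ₂ - 1))
            + (θ₁' * θ₂ * F₀ y₂ ^ (θ₁ + θ₂ - θ₁') / (θ₁ + θ₂ - θ₁'))
              * (f₀ u * F₀ u ^ (θ₁' - 1)) := by
      intro u hu
      have hub : u ∈ Ioo a b := ⟨hu.1, hu.2.trans hy₂.2⟩
      have hP : (0:ℝ) < F₀ u := hF₀pos u hub
      have h2eq : ∀ᵐ v : ℝ, v ∈ Ioc a u →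
          (θ₁ * θ₂' * f₀ u * F₀ u ^ (θ₁ + θ₂ - θ₂' - 1)) * (f₀ v * F₀ v ^ (θ₂' - 1))
            = dprh a b F₀ f₀ θ₁ θ₂ θ₁' θ₂' u v := by
        filter_upwards [aene u] with v hvne hv
        have hvu : v < u := lt_of_le_of_ne hv.2 hvne
        simp only [dprh]
        rw [if_neg (by rintro ⟨_, huv, _⟩; exact absurd huv (not_lt.2 hvu.le)),
          if_pos ⟨hv.1, hvu, hub.2⟩]
        ring
      have i2 : IntervalIntegrable (dprh a b F₀ f₀ θ₁ θ₂ θ₁' θ₂' u) volume a u := by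
        rw [intervalIntegrable_iff_integrableOn_Ioc_of_le hu.1.le]
        exact ((intM θ₂' (Or.inl hθ₂') a u le_rfl hu.1.le hub.2.le
          (Or.inl hθ₂')).const_mul _).congr
          ((ae_restrict_iff' measurableSet_Ioc).2 h2eq)
      have e1 : (∫ v in a..u, dprh a b F₀ f₀ θ₁ θ₂ θ₁' θ₂' u v)
          = θ₁ * (f₀ u * F₀ u ^ (θ₁ + θ₂ - 1)) := by
        rw [← intervalIntegral.integral_congr_ae' h2eq (hempty hu.1.le _ _),
          intervalIntegral.integral_const_mul, valA θ₂' hθ₂' u hub,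
          show θ₁ + θ₂ - 1 = (θ₁ + θ₂ - θ₂' - 1) + θ₂' by ring, Real.rpow_add hP]
        field_simp
      have h1eq : ∀ᵐ v : ℝ, v ∈ Ioc u y₂ →
          (θ₁' * θ₂ * f₀ u * F₀ u ^ (θ₁' - 1)) * (f₀ v * F₀ v ^ (θ₁ + θ₂ - θ₁' - 1))
            = dprh a b F₀ f₀ θ₁ θ₂ θ₁' θ₂' u v := by
        refine Filter.Eventually.of_forall fun v hv => ?_
        simp only [dprh]
        rw [if_pos ⟨hub.1, hv.1, lt_of_le_of_lt hv.2 hy₂.2⟩]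
        ring
      have i3 : IntervalIntegrable (dprh a b F₀ f₀ θ₁ θ₂ θ₁' θ₂' u) volume u y₂ := by
        rw [intervalIntegrable_iff_integrableOn_Ioc_of_le hu.2.le]
        exact ((intM (θ₁ + θ₂ - θ₁') (Or.inr hθcne) u y₂ hub.1.le hu.2.le hy₂.2.le
          (Or.inr hu.1)).const_mul _).congr
          ((ae_restrict_iff' measurableSet_Ioc).2 h1eq)
      have e2 : (∫ v in u..y₂, dprh a b F₀ f₀ θ₁ θ₂ θ₁' θ₂' u v)
          = (θ₁' * θ₂ * F₀ y₂ ^ (θ₁ + θ₂ - θ₁') / (θ₁ + θ₂ - θ₁'))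
              * (f₀ u * F₀ u ^ (θ₁' - 1))
            - (θ₁' * θ₂ / (θ₁ + θ₂ - θ₁')) * (f₀ u * F₀ u ^ (θ₁ + θ₂ - 1)) := by
        rw [← intervalIntegral.integral_congr_ae' h1eq (hempty hu.2.le _ _),
          intervalIntegral.integral_const_mul,
          valC (θ₁ + θ₂ - θ₁') hθcne u y₂ hub hy₂ hu.2.le,
          show θ₁ + θ₂ - 1 = (θ₁' - 1) + (θ₁ + θ₂ - θ₁') by ring, Real.rpow_add hP]
        field_simp
      rw [← intervalIntegral.integral_add_adjacent_intervals i2 i3, e1, e2]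
      ring
    -- inner integral for u above y₂
    have hInner2b : ∀ u ∈ Ioo y₂ b,
        (∫ v in a..y₂, dprh a b F₀ f₀ θ₁ θ₂ θ₁' θ₂' u v)
          = (θ₁ * F₀ y₂ ^ θ₂') * (f₀ u * F₀ u ^ (θ₁ + θ₂ - θ₂' - 1)) := by
      intro u hu
      have hub : u ∈ Ioo a b := ⟨hy₂.1.trans hu.1, hu.2⟩
      have h2eq : ∀ᵐ v : ℝ, v ∈ Ioc a y₂ →
          (θ₁ * θ₂' * f₀ u * F₀ u ^ (θ₁ + θ₂ - θ₂' - 1)) * (f₀ v * F₀ v ^ (θ₂' - 1))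
            = dprh a b F₀ f₀ θ₁ θ₂ θ₁' θ₂' u v := by
        refine Filter.Eventually.of_forall fun v hv => ?_
        have hvu : v < u := lt_of_le_of_lt hv.2 hu.1
        simp only [dprh]
        rw [if_neg (by rintro ⟨_, huv, _⟩; exact absurd huv (not_lt.2 hvu.le)),
          if_pos ⟨hv.1, hvu, hub.2⟩]
        ring
      rw [← intervalIntegral.integral_congr_ae' h2eq (hempty hy₂.1.le _ _),
        intervalIntegral.integral_const_mul, valA θ₂' hθ₂' y₂ hy₂]
      field_simp
    -- outer integral split
    have J1 : IntervalIntegrable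
        (fun u => ∫ v in a..y₂, dprh a b F₀ f₀ θ₁ θ₂ θ₁' θ₂' u v) volume a y₂ := by
      rw [intervalIntegrable_iff_integrableOn_Ioc_of_le hy₂.1.le]
      have hnice : IntegrableOn
          (fun u => (θ₁ - θ₁' * θ₂ / (θ₁ + θ₂ - θ₁')) * (f₀ u * F₀ u ^ (θ₁ + θ₂ - 1))
            + (θ₁' * θ₂ * F₀ y₂ ^ (θ₁ + θ₂ - θ₁') / (θ₁ + θ₂ - θ₁'))
              * (f₀ u * F₀ u ^ (θ₁' - 1))) (Ioc a y₂) :=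
        ((intM (θ₁ + θ₂) (Or.inl hθ12) a y₂ le_rfl hy₂.1.le hy₂.2.le
            (Or.inl hθ12)).const_mul _).add
          ((intM θ₁' (Or.inl hθ₁') a y₂ le_rfl hy₂.1.le hy₂.2.le
            (Or.inl hθ₁')).const_mul _)
      refine hnice.congr ((ae_restrict_iff' measurableSet_Ioc).2 ?_)
      filter_upwards [aene y₂] with u hune hu
      exact (hInner2a u ⟨hu.1, lt_of_le_of_ne hu.2 hune⟩).symm
    have J2 : IntervalIntegrable
        (fun u => ∫ v in a..y₂, dprh a b F₀ f₀ θ₁ θ₂ θ₁' θ₂' u v) volume y₂ b := by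
      rw [intervalIntegrable_iff_integrableOn_Ioc_of_le hy₂.2.le]
      have hnice : IntegrableOn
          (fun u => (θ₁ * F₀ y₂ ^ θ₂') * (f₀ u * F₀ u ^ (θ₁ + θ₂ - θ₂' - 1)))
          (Ioc y₂ b) :=
        (intM (θ₁ + θ₂ - θ₂') (Or.inr hθdne) y₂ b hy₂.1.le hy₂.2.le le_rfl
          (Or.inr hy₂.1)).const_mul _
      refine hnice.congr ((ae_restrict_iff' measurableSet_Ioc).2 ?_)
      filter_upwards [aene b] with u hune hu
      exact (hInner2b u ⟨hu.1, lt_of_le_of_ne hu.2 hune⟩).symm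
    rw [← intervalIntegral.integral_add_adjacent_intervals J1 J2]
    have O1 : (∫ u in a..y₂, ∫ v in a..y₂, dprh a b F₀ f₀ θ₁ θ₂ θ₁' θ₂' u v)
        = (θ₁ - θ₁' * θ₂ / (θ₁ + θ₂ - θ₁')) * (F₀ y₂ ^ (θ₁ + θ₂) / (θ₁ + θ₂))
          + θ₂ * F₀ y₂ ^ (θ₁ + θ₂) / (θ₁ + θ₂ - θ₁') := by
      have hXY : F₀ y₂ ^ (θ₁ + θ₂ - θ₁') * F₀ y₂ ^ θ₁' = F₀ y₂ ^ (θ₁ + θ₂) := by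
        rw [← Real.rpow_add hQ]; ring_nf
      have hcg : (∫ u in a..y₂, ∫ v in a..y₂, dprh a b F₀ f₀ θ₁ θ₂ θ₁' θ₂' u v)
          = ∫ u in a..y₂,
              ((θ₁ - θ₁' * θ₂ / (θ₁ + θ₂ - θ₁')) * (f₀ u * F₀ u ^ (θ₁ + θ₂ - 1))
                + (θ₁' * θ₂ * F₀ y₂ ^ (θ₁ + θ₂ - θ₁') / (θ₁ + θ₂ - θ₁'))
                  * (f₀ u * F₀ u ^ (θ₁' - 1))) := by
        refine intervalIntegral.integral_congr_ae' ?_ (hempty hy₂.1.le _ _)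
        filter_upwards [aene y₂] with u hune hu
        exact hInner2a u ⟨hu.1, lt_of_le_of_ne hu.2 hune⟩
      rw [hcg, intervalIntegral.integral_add
          (((intervalIntegrable_iff_integrableOn_Ioc_of_le hy₂.1.le).mpr
            (intM (θ₁ + θ₂) (Or.inl hθ12) a y₂ le_rfl hy₂.1.le hy₂.2.le
              (Or.inl hθ12))).const_mul _)
          (((intervalIntegrable_iff_integrableOn_Ioc_of_le hy₂.1.le).mpr
            (intM θ₁' (Or.inl hθ₁') a y₂ le_rfl hy₂.1.le hy₂.2.le
              (Or.inl hθ₁'))).const_mul _),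
        intervalIntegral.integral_const_mul, intervalIntegral.integral_const_mul,
        valA (θ₁ + θ₂) hθ12 y₂ hy₂, valA θ₁' hθ₁' y₂ hy₂, ← hXY]
      field_simp
    have O2 : (∫ u in y₂..b, ∫ v in a..y₂, dprh a b F₀ f₀ θ₁ θ₂ θ₁' θ₂' u v)
        = θ₁ * F₀ y₂ ^ θ₂' / (θ₁ + θ₂ - θ₂')
            - θ₁ * F₀ y₂ ^ (θ₁ + θ₂) / (θ₁ + θ₂ - θ₂') := by
      have hZW : F₀ y₂ ^ θ₂' * F₀ y₂ ^ (θ₁ + θ₂ - θ₂') = F₀ y₂ ^ (θ₁ + θ₂) := by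
        rw [← Real.rpow_add hQ]; ring_nf
      have hcg : (∫ u in y₂..b, ∫ v in a..y₂, dprh a b F₀ f₀ θ₁ θ₂ θ₁' θ₂' u v)
          = ∫ u in y₂..b,
              ((θ₁ * F₀ y₂ ^ θ₂') * (f₀ u * F₀ u ^ (θ₁ + θ₂ - θ₂' - 1))) := by
        refine intervalIntegral.integral_congr_ae' ?_ (hempty hy₂.2.le _ _)
        filter_upwards [aene b] with u hune hu
        exact hInner2b u ⟨hu.1, lt_of_le_of_ne hu.2 hune⟩
      rw [hcg, intervalIntegral.integral_const_mul,
        valB (θ₁ + θ₂ - θ₂') hθdne y₂ hy₂, ← hZW]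
      field_simp
    rw [O1, O2]
    field_simp
    ring
end
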